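/- arXiv:2010.08023 — 3 statements merged into one kernel-verified Lean document; each statement's English description precedes it below -/
import Mathlib

section
/- Let n ≥ 3 be a prime, q ≥ 2 an integer, and m = (q^n - 1)/(q - 1). If a prime r divides m, then either r ≡ 1 (mod 2n), or r = n and q ≡ 1 (mod n). -/
/-! Reduce modulo `r`. Since `(q - 1) m = q ^ n - 1`, the order of `q` modulo `r` divides the
prime `n`. If it is `1`, then `m ≡ n (mod r)`, so `r = n` and `q ≡ 1 (mod n)`. If it is `n`, then
`n ∣ r - 1` by Fermat; as `r` and `n` are both odd, `2 n ∣ r - 1`. -/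

open Finset

theorem pow_eq_one_of_geom_sum_eq_zero {R : Type*} [CommRing R] {x : R} {n : ℕ}
    (h : ∑ i ∈ range n, x ^ i = 0) : x ^ n = 1 := by
  have := geom_sum_mul x n
  rw [h, zero_mul] at this
  exact sub_eq_zero.mp this.symm

theorem Nat.mod_two_mul_eq_one_of_dvd_sub_one {n r : ℕ} (hn : Odd n) (hr : Odd r)
    (h : n ∣ r - 1) : r % (2 * n) = 1 := by
  have h2 : 2 ∣ r - 1 := by have := Nat.odd_iff.mp hr; omega
  have h2n : 2 * n ∣ r - 1 :=
    (Nat.coprime_two_left.mpr hn).mul_dvd_of_dvd_of_dvd h2 h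
  have hmod : 1 ≡ r [MOD 2 * n] := (Nat.modEq_iff_dvd' hr.pos).mpr h2n
  rw [← hmod, Nat.one_mod_eq_one.mpr (by have := hn.pos; omega)]

theorem prime_divisors_of_geometric_general
    (n q r : ℕ) (hn : n.Prime) (hn3 : 3 ≤ n) (hr : r.Prime)
    (hdvd : r ∣ ∑ i ∈ Finset.range n, q ^ i) :
    r % (2 * n) = 1 ∨ (r = n ∧ q % n = 1) := by
  have : Fact r.Prime := ⟨hr⟩
  have hsum : ∑ i ∈ range n, (q : ZMod r) ^ i = 0 := by
    exact_mod_cast (ZMod.natCast_eq_zero_iff _ _).mpr hdvd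
  have hpow : (q : ZMod r) ^ n = 1 := pow_eq_one_of_geom_sum_eq_zero hsum
  rcases hn.eq_one_or_self_of_dvd _ (orderOf_dvd_of_pow_eq_one hpow) with horder | horder
  · have hq1 : (q : ZMod r) = 1 := orderOf_eq_one_iff.mp horder
    have hrn : r = n := by
      refine (Nat.prime_dvd_prime_iff_eq hr hn).mp ((ZMod.natCast_eq_zero_iff _ _).mp ?_)
      simpa [hq1] using hsum
    subst hrn
    refine Or.inr ⟨rfl, ?_⟩
    have := (ZMod.natCast_eq_natCast_iff' q 1 r).mp (by simpa using hq1)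
    rwa [Nat.one_mod_eq_one.mpr hr.one_lt.ne'] at this
  · have hq0 : (q : ZMod r) ≠ 0 := fun h0 ↦ by simp [h0, hn.ne_zero] at hpow
    have hnr : n ∣ r - 1 := horder ▸ ZMod.orderOf_dvd_card_sub_one hq0
    have hr2 : r ≠ 2 := by
      rintro rfl
      exact absurd (Nat.le_of_dvd one_pos hnr) (by omega)
    exact Or.inl (Nat.mod_two_mul_eq_one_of_dvd_sub_one (hn.odd_of_ne_two (by omega))
      (hr.odd_of_ne_two hr2) hnr)

theorem prime_divisors_of_geometric
    (n q r : ℕ) (hn : n.Prime) (hn3 : 3 ≤ n) (hq : 2 ≤ q) (hr : r.Prime)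
    (hdvd : r ∣ ∑ i ∈ Finset.range n, q ^ i) :
    r % (2 * n) = 1 ∨ (r = n ∧ q % n = 1) :=
  prime_divisors_of_geometric_general n q r hn hn3 hr hdvd
end

section
/- Let p be a prime, e ≥ 2, and set q = p^e. If n > e then m = (q^n - 1)/(q - 1) is composite. Specifically, m equals the product (1 + p + ... + p^(n-1))(1 + p^n + ... + p^(n(e-1))) divided by (1 + p + ... + p^(e-1)), and each factor in the numerator exceeds the denominator. -/
/-!
Put `B = 1 + ⋯ + p^(e-1)`, `C = 1 + ⋯ + p^(n-1)` and `D = 1 + p^n + ⋯ + p^(n(e-1))`. Both `m · B`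
and `C · D` equal `1 + p + ⋯ + p^(ne-1)`, because every `k < ne` is uniquely `ei + j` with `j < e`
and uniquely `ni + j` with `j < n`. A prime `m` would divide `C` or `D`, hence be at most it, and
then `m · B < C · D` since `B` is smaller than both.
-/

open Finset

theorem geom_sum_pow_mul_geom_sum {R : Type*} [Semiring R] (x : R) (m n : ℕ) :
    (∑ i ∈ range m, (x ^ n) ^ i) * ∑ j ∈ range n, x ^ j =
      ∑ k ∈ range (m * n), x ^ k := by
  induction m with
  | zero => simp
  | succ m ih =>
    rw [sum_range_succ, add_mul, ih, Nat.succ_mul, sum_range_add, ← pow_mul', mul_sum]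
    simp only [pow_add]

theorem geom_sum_pow_mul_geom_sum_comm {R : Type*} [CommSemiring R] (x : R) (m n : ℕ) :
    (∑ i ∈ range m, (x ^ n) ^ i) * ∑ j ∈ range n, x ^ j =
      (∑ i ∈ range m, x ^ i) * ∑ j ∈ range n, (x ^ m) ^ j := by
  rw [geom_sum_pow_mul_geom_sum, mul_comm (∑ i ∈ range m, x ^ i), geom_sum_pow_mul_geom_sum,
    Nat.mul_comm]

section Ordered

variable {R : Type*} [Semiring R] [PartialOrder R] [IsStrictOrderedRing R]

theorem geom_sum_lt_geom_sum_right {x : R} (hx : 0 < x) {m n : ℕ} (hmn : m < n) :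
    ∑ i ∈ range m, x ^ i < ∑ i ∈ range n, x ^ i :=
  sum_lt_sum_of_subset (range_subset_range.2 hmn.le) (mem_range.2 hmn) (by simp)
    (pow_pos hx m) fun j _ _ => (pow_pos hx j).le

theorem geom_sum_lt_geom_sum_left {x y : R} (hx : 0 ≤ x) (hxy : x < y) {n : ℕ} (hn : 2 ≤ n) :
    ∑ i ∈ range n, x ^ i < ∑ i ∈ range n, y ^ i :=
  sum_lt_sum (fun i _ => pow_le_pow_left₀ hx hxy.le i)
    ⟨1, mem_range.2 (by omega), by simpa using hxy⟩

end Ordered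

theorem Nat.not_prime_of_mul_eq_mul_of_lt {a b c d : ℕ} (h : a * b = c * d) (hbc : b < c)
    (hbd : b < d) : ¬ a.Prime := by
  intro ha
  rcases ha.dvd_mul.1 ⟨b, h.symm⟩ with hac | had
  · have := Nat.le_of_dvd (by omega) hac
    nlinarith
  · have := Nat.le_of_dvd (by omega) had
    nlinarith

theorem geometric_composite_of_prime_power_base
    (p e n : ℕ) (hp : p.Prime) (he : 2 ≤ e) (hn : e < n) :
    ¬ (∑ i ∈ Finset.range n, (p ^ e) ^ i).Prime ∧
    (∑ i ∈ Finset.range n, (p ^ e) ^ i) * (∑ i ∈ Finset.range e, p ^ i) =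
      (∑ i ∈ Finset.range n, p ^ i) * (∑ i ∈ Finset.range e, (p ^ n) ^ i) ∧
    (∑ i ∈ Finset.range e, p ^ i) < (∑ i ∈ Finset.range n, p ^ i) ∧
    (∑ i ∈ Finset.range e, p ^ i) < (∑ i ∈ Finset.range e, (p ^ n) ^ i) := by
  have hid := geom_sum_pow_mul_geom_sum_comm p n e
  have hBC := geom_sum_lt_geom_sum_right hp.pos hn
  have hBD :=
    geom_sum_lt_geom_sum_left p.zero_le (lt_self_pow₀ hp.one_lt (show 1 < n by omega)) he
  exact ⟨Nat.not_prime_of_mul_eq_mul_of_lt hid hBC hBD, hid, hBC, hBD⟩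
end

section
/- Let m be an odd number with m - 1 = (2l+1)·2^k, and let t be an integer coprime to m. Define a₀ = t^(2l+1) mod m and a_i = a_{i-1}² mod m for i = 1, ..., k. If m is prime, then either some a_i = 1 with a_{i-1} ≡ -1 (mod m) or a₀ ≡ 1 (mod m), and a_k = t^(m-1) ≡ 1 (mod m). -/
theorem eq_one_or_exists_pow_two_pow_eq_neg_one {R : Type*} [Ring R] [NoZeroDivisors R]
    {x : R} {n : ℕ} (h : x ^ 2 ^ n = 1) : x = 1 ∨ ∃ i < n, x ^ 2 ^ i = -1 := by
  induction n with
  | zero => simpa using h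
  | succ n ih =>
    rw [pow_succ, pow_mul, sq, mul_self_eq_one_iff] at h
    rcases h with h | h
    · exact (ih h).imp_right fun ⟨i, hi, hx⟩ ↦ ⟨i, hi.trans n.lt_succ_self, hx⟩
    · exact Or.inr ⟨n, n.lt_succ_self, h⟩

theorem Nat.mod_eq_one_of_natCast_eq_one {m a : ℕ} (hm : 1 < m) (h : (a : ZMod m) = 1) :
    a % m = 1 := by
  have := Fact.mk hm
  rw [← ZMod.val_natCast, h, ZMod.val_one]

theorem Nat.mod_eq_sub_one_of_natCast_eq_neg_one {m a : ℕ} [NeZero m]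
    (h : (a : ZMod m) = -1) : a % m = m - 1 := by
  obtain ⟨n, rfl⟩ := Nat.exists_eq_succ_of_ne_zero (NeZero.ne m)
  rw [← ZMod.val_natCast, h, ZMod.val_neg_one, Nat.succ_sub_one]

theorem miller_rabin_correctness_general
    (m l k t : ℕ) (hm : m.Prime)
    (hdecomp : m - 1 = (2 * l + 1) * 2 ^ k)
    (ht : Nat.Coprime t m) :
    (t ^ (2 * l + 1) % m = 1 ∨
      ∃ i, i < k ∧ t ^ ((2 * l + 1) * 2 ^ i) % m = m - 1) ∧
    t ^ (m - 1) % m = 1 := by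
  have := Fact.mk hm
  have hfermat : (t : ZMod m) ^ (m - 1) = 1 :=
    ZMod.pow_card_sub_one_eq_one (ZMod.unitOfCoprime t ht).ne_zero
  have hsquares : ((t : ZMod m) ^ (2 * l + 1)) ^ 2 ^ k = 1 := by rwa [← pow_mul, ← hdecomp]
  refine ⟨?_, Nat.mod_eq_one_of_natCast_eq_one hm.one_lt (by push_cast; exact hfermat)⟩
  rcases eq_one_or_exists_pow_two_pow_eq_neg_one hsquares with h | ⟨i, hi, h⟩
  · exact Or.inl (Nat.mod_eq_one_of_natCast_eq_one hm.one_lt (by push_cast; exact h))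
  · exact Or.inr ⟨i, hi, Nat.mod_eq_sub_one_of_natCast_eq_neg_one (by push_cast; rwa [pow_mul])⟩

theorem miller_rabin_correctness
    (m l k t : ℕ) (hodd : Odd m) (hm : m.Prime)
    (hdecomp : m - 1 = (2 * l + 1) * 2 ^ k)
    (ht : Nat.Coprime t m) :
    (t ^ (2 * l + 1) % m = 1 ∨
      ∃ i, i < k ∧ t ^ ((2 * l + 1) * 2 ^ i) % m = m - 1) ∧
    t ^ (m - 1) % m = 1 :=
  miller_rabin_correctness_general m l k t hm hdecomp ht
end
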